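/- Let G = (V,E) be an ℓ-layered DST instance and let y : E → ℝ be nonnegative with Σ_{e ∈ δ^in(v)} y_e ≤ 1 for every v ∈ V \ {r}. Then for every path p' ∈ Q and every vertex v ∈ V, Σ_{p ∈ Q(v), p' ⊆ p} Π_{e ∈ p} y_e ≤ Π_{e ∈ p'} y_e. (That is, setting x_p = Π_{e ∈ p} y_e satisfies all subpath constraints x_{p'} ≥ Σ_{p ∈ Q(v), p' ⊆ p} x_p of DST-LP1.) -/

import Mathlib

/-- An `ℓ`-layered instance of the Directed Steiner Tree problem on the (finite)
vertex type `V`: a root `r`, a terminal set `T`, an edge set `E`, and a layering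
function `layer` partitioning `V` into layers `V_0, …, V_ℓ` with `V_0 = {r}`,
`V_ℓ = T`, and every edge going from some layer `V_i` to `V_{i+1}`. -/
structure LayeredDST (V : Type) [Fintype V] [DecidableEq V] where
  ℓ : ℕ
  E : Finset (V × V)
  r : V
  T : Finset V
  layer : V → ℕ
  layer_le : ∀ v : V, layer v ≤ ℓ
  layer_root : ∀ v : V, layer v = 0 ↔ v = r
  layer_terminal : ∀ v : V, layer v = ℓ ↔ v ∈ T
  edge_layer : ∀ e ∈ E, layer e.2 = layer e.1 + 1

/-- Product of `y` over the edges of a path `p` (encoded as its list of edges);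
the empty product is `1`. -/
def pathProd {V : Type} (y : V × V → ℝ) (p : List (V × V)) : ℝ := (p.map y).prod

namespace LayeredDST

variable {V : Type} [Fintype V] [DecidableEq V] (G : LayeredDST V)

/-- `p` is a directed walk in `G`, encoded as its list of edges:
all edges belong to `E` and consecutive edges are incident. -/
def IsWalk (p : List (V × V)) : Prop :=
  (∀ e ∈ p, e ∈ G.E) ∧ p.Chain' (fun e f => e.2 = f.1)

/-- `p` is a directed path (walk) in `G` starting at the vertex `v`. -/
def IsPathFrom (v : V) (p : List (V × V)) : Prop :=
  G.IsWalk p ∧ ∀ e ∈ p.head?, e.1 = v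

/-- `p` is a directed path in `G` starting at the root `r`. -/
def IsPath (p : List (V × V)) : Prop := G.IsPathFrom G.r p

/-- The endpoint of a path starting at the root (the root itself for the trivial path). -/
def pathEnd (p : List (V × V)) : V := (p.getLast?).elim G.r Prod.snd

/-- `Q`: the set of all directed paths starting at the root. -/
def Q : Set (List (V × V)) := {p | G.IsPath p}

/-- `Q(v)`: the set of directed paths from the root `r` to `v`. -/
def Qv (v : V) : Set (List (V × V)) := {p | G.IsPath p ∧ G.pathEnd p = v}

/-- `Q(e)`: the set of directed paths from the root whose last edge is `e`. -/
def Qe (e : V × V) : Set (List (V × V)) := {p | G.IsPath p ∧ p.getLast? = some e}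

/-- `δ^in(v)`: the set of edges of `E` entering `v`. -/
def inEdges (v : V) : Finset (V × V) := G.E.filter (fun e => e.2 = v)

/-- `δ^out(v)`: the set of edges of `E` leaving `v`. -/
def outEdges (v : V) : Finset (V × V) := G.E.filter (fun e => e.1 = v)

/-- Feasibility for the linear program (DST-LP1): nonnegativity, the covering
constraints `∑_{p ∈ Q(t)} x_p ≥ 1` for each terminal `t`, and the subpath
constraints `∑_{p ∈ Q(t), p' ⊆ p} x_p ≤ x_{p'}` for each terminal `t` and `p' ∈ Q`. -/
def FeasibleLP1 (x : List (V × V) → ℝ) : Prop :=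
  (∀ p ∈ G.Q, 0 ≤ x p) ∧
  (∀ t ∈ G.T, 1 ≤ ∑ᶠ p ∈ G.Qv t, x p) ∧
  (∀ t ∈ G.T, ∀ p' ∈ G.Q, (∑ᶠ p ∈ {p ∈ G.Qv t | p' <+: p}, x p) ≤ x p')

/-- The objective function of (DST-LP1): `∑_{e ∈ E} ∑_{p ∈ Q(e)} c_e · x_p`. -/
noncomputable def objLP1 (c : V × V → ℝ) (x : List (V × V) → ℝ) : ℝ :=
  ∑ e ∈ G.E, ∑ᶠ p ∈ G.Qe e, c e * x p

end LayeredDST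

/-! Induct on the layer of `v`. If `layer v ≤ |p'|`, the only candidate path is `p'` itself.
Otherwise every path of `Q(v)` extending `p'` is `q ++ [e]` for a unique in-edge `e` of `v`
and a path `q ∈ Q(e.1)` extending `p'`. So the sum for `v` equals
`∑_{e ∈ δ^in(v)} y_e · S(e.1)`, where `S(u)` is the sum for `u`; by induction
`S(e.1) ≤ x_{p'}`, and `∑_{e ∈ δ^in(v)} y_e ≤ 1` closes it. -/

theorem pathProd_append_singleton {V : Type} (y : V × V → ℝ) (q : List (V × V)) (e : V × V) :
    pathProd y (q ++ [e]) = pathProd y q * y e := by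
  simp [pathProd]

theorem pathProd_nonneg {V : Type} {y : V × V → ℝ} {p : List (V × V)}
    (hy : ∀ e ∈ p, 0 ≤ y e) : 0 ≤ pathProd y p :=
  List.prod_nonneg (List.forall_mem_map.2 hy)

namespace LayeredDST

variable {V : Type} [Fintype V] [DecidableEq V] (G : LayeredDST V)

def prefixedPaths (p' : List (V × V)) (v : V) : Set (List (V × V)) := {p ∈ G.Qv v | p' <+: p}

@[simp]
theorem layer_r : G.layer G.r = 0 :=
  (G.layer_root G.r).2 rfl

theorem mem_inEdges {v : V} {e : V × V} : e ∈ G.inEdges v ↔ e ∈ G.E ∧ e.2 = v :=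
  Finset.mem_filter

@[simp]
theorem pathEnd_append_singleton (q : List (V × V)) (e : V × V) :
    G.pathEnd (q ++ [e]) = e.2 := by
  simp [pathEnd]

theorem isPath_append_singleton_iff (q : List (V × V)) (e : V × V) :
    G.IsPath (q ++ [e]) ↔ G.IsPath q ∧ e ∈ G.E ∧ G.pathEnd q = e.1 := by
  rcases List.eq_nil_or_concat' q with rfl | ⟨q, b, rfl⟩
  · simp [IsPath, IsPathFrom, IsWalk, List.Chain', pathEnd, eq_comm]
  · simp only [IsPath, IsPathFrom, IsWalk, List.Chain', List.isChain_append,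
      List.forall_mem_append, List.forall_mem_singleton, List.head?_append, List.getLast?_concat,
      List.head?_cons, Option.mem_def, Option.or_assoc, Option.some_or, List.isChain_singleton,
      Option.some.injEq, forall_eq', true_and, pathEnd_append_singleton]
    tauto

variable {G} in
theorem IsPath.length_eq_layer {p : List (V × V)} (hp : G.IsPath p) :
    p.length = G.layer (G.pathEnd p) := by
  induction p using List.reverseRecOn with
  | nil => simp [pathEnd]
  | append_singleton q e ih =>
    obtain ⟨hq, he, hstart⟩ := (G.isPath_append_singleton_iff q e).1 hp
    simp [G.edge_layer e he, hstart, ih hq]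

theorem finite_Qv (v : V) : (G.Qv v).Finite :=
  (List.finite_length_eq (V × V) (G.layer v)).subset fun p ⟨hp, hend⟩ => by
    simpa [hend] using hp.length_eq_layer

theorem finite_prefixedPaths (p' : List (V × V)) (v : V) : (G.prefixedPaths p' v).Finite :=
  (G.finite_Qv v).subset fun _ hp => hp.1

theorem prefixedPaths_subset_singleton {p' : List (V × V)} {v : V}
    (hv : G.layer v ≤ p'.length) : G.prefixedPaths p' v ⊆ {p'} := by
  rintro p ⟨⟨hp, rfl⟩, hpre⟩
  have hlen := hp.length_eq_layer
  have hle := hpre.length_le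
  exact (hpre.eq_of_length (by omega)).symm

theorem prefixedPaths_eq_biUnion {p' : List (V × V)} {v : V} (hv : p'.length < G.layer v) :
    G.prefixedPaths p' v = ⋃ e ∈ (G.inEdges v : Set (V × V)),
      (· ++ [e]) '' G.prefixedPaths p' e.1 := by
  ext p
  simp only [Set.mem_iUnion, Set.mem_image, Finset.mem_coe, exists_prop]
  constructor
  · rintro ⟨⟨hp, rfl⟩, hpre⟩
    rcases List.eq_nil_or_concat' p with rfl | ⟨q, e, rfl⟩
    · simp [pathEnd] at hv
    obtain ⟨hq, he, hend⟩ := (G.isPath_append_singleton_iff q e).1 hp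
    have hlt : p'.length < (q ++ [e]).length := hp.length_eq_layer ▸ hv
    have hpre' : p' <+: q :=
      (List.prefix_concat_iff.1 hpre).resolve_left (by rintro rfl; simp at hlt)
    exact ⟨e, G.mem_inEdges.2 ⟨he, (G.pathEnd_append_singleton q e).symm⟩, q,
      ⟨⟨hq, hend⟩, hpre'⟩, rfl⟩
  · rintro ⟨e, he, q, ⟨⟨hq, hend⟩, hpre⟩, rfl⟩
    obtain ⟨heE, rfl⟩ := G.mem_inEdges.1 he
    exact ⟨⟨(G.isPath_append_singleton_iff q e).2 ⟨hq, heE, hend⟩,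
      G.pathEnd_append_singleton q e⟩, hpre.trans (List.prefix_append q [e])⟩

theorem finsum_prefixedPaths_eq_sum_inEdges (y : V × V → ℝ) {p' : List (V × V)} {v : V}
    (hv : p'.length < G.layer v) :
    ∑ᶠ p ∈ G.prefixedPaths p' v, pathProd y p =
      ∑ e ∈ G.inEdges v, (∑ᶠ q ∈ G.prefixedPaths p' e.1, pathProd y q) * y e := by
  have hdisj : (G.inEdges v : Set (V × V)).PairwiseDisjoint
      fun e => (· ++ [e]) '' G.prefixedPaths p' e.1 := by
    rintro a - b - hab
    refine Set.disjoint_left.2 ?_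
    rintro _ ⟨q, -, rfl⟩ ⟨q', -, hq⟩
    exact hab (by simpa using (List.append_inj' hq rfl).2.symm)
  rw [G.prefixedPaths_eq_biUnion hv, finsum_mem_biUnion hdisj (G.inEdges v).finite_toSet
    fun e _ => (G.finite_prefixedPaths p' e.1).image _, finsum_mem_coe_finset]
  refine Finset.sum_congr rfl fun e _ => ?_
  rw [finsum_mem_image (List.append_left_injective [e]).injOn, finsum_mem_mul]
  simp only [pathProd_append_singleton]

end LayeredDST

/-- If `y ≥ 0` and `∑_{e ∈ δ^in(v)} y_e ≤ 1` for every vertex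
`v ≠ r`, then for every path `p' ∈ Q` and every vertex `v`,
`∑_{p ∈ Q(v), p' ⊆ p} ∏_{e ∈ p} y_e ≤ ∏_{e ∈ p'} y_e`: the vector
`x_p := ∏_{e ∈ p} y_e` satisfies all subpath constraints of (DST-LP1). -/
theorem pathProd_satisfies_subpath_constraints
    (V : Type) [Fintype V] [DecidableEq V] (G : LayeredDST V)
    (y : V × V → ℝ) (hy : ∀ e ∈ G.E, 0 ≤ y e)
    (hdeg : ∀ v : V, v ≠ G.r → (∑ e ∈ G.inEdges v, y e) ≤ 1)
    (p' : List (V × V)) (hp' : p' ∈ G.Q) (v : V) :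
    (∑ᶠ p ∈ {p ∈ G.Qv v | p' <+: p}, pathProd y p) ≤ pathProd y p' := by
  have hp'_nonneg : 0 ≤ pathProd y p' := pathProd_nonneg fun e he => hy e (hp'.1.1 e he)
  change ∑ᶠ p ∈ G.prefixedPaths p' v, pathProd y p ≤ pathProd y p'
  induction hn : G.layer v using Nat.strong_induction_on generalizing v with
  | _ n ih =>
  rcases le_or_gt (G.layer v) p'.length with hle | hlt
  · rcases Set.subset_singleton_iff_eq.1 (G.prefixedPaths_subset_singleton hle) with h | h
    · simpa [h] using hp'_nonneg
    · simp [h]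
  have hv : v ≠ G.r := by rintro rfl; simp at hlt
  calc ∑ᶠ p ∈ G.prefixedPaths p' v, pathProd y p
      = ∑ e ∈ G.inEdges v, (∑ᶠ q ∈ G.prefixedPaths p' e.1, pathProd y q) * y e :=
        G.finsum_prefixedPaths_eq_sum_inEdges y hlt
    _ ≤ ∑ e ∈ G.inEdges v, pathProd y p' * y e := by
        gcongr with e he
        · exact hy e (G.mem_inEdges.1 he).1
        · obtain ⟨heE, rfl⟩ := G.mem_inEdges.1 he
          exact ih _ (by rw [← hn, G.edge_layer e heE]; omega) e.1 rfl
    _ = pathProd y p' * ∑ e ∈ G.inEdges v, y e := by rw [Finset.mul_sum]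
    _ ≤ pathProd y p' := mul_le_of_le_one_right hp'_nonneg (hdeg v hv)
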